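/- arXiv:2407.04847 — 2 statements merged into one kernel-verified Lean document; each statement's English description precedes it below -/
import Mathlib

section
/- Let $u, v, r$ be real-valued functions on $(a,c)$ with $r$ locally integrable, $u(x)v(x)\neq 0$ on $(a,c)$, $\int_a^c |u(t)v(t)r(t)|\,dt < \infty$, and suppose $|u(t)v(x) - v(t)u(x)| < |v(t)u(x)|$ for all $a<t<x<c$. Define $\rho(x) = \int_a^x |u(t)v(t)r(t)|\,dt$ and define recursively $\varphi_0 = u$ and $\varphi_n(x) = \int_a^x [u(t)v(x) - v(t)u(x)]\varphi_{n-1}(t)r(t)\,dt$. Then for all $n \geq 0$ and $x \in (a,c)$, $|\varphi_n(x)| \leq \rho(x)^n |u(x)|$. -/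
open MeasureTheory Filter Topology Set

theorem stmt1 (a c : ℝ) (hac : a < c) (u v r : ℝ → ℝ) (φ : ℕ → ℝ → ℝ)
    (hrloc : LocallyIntegrableOn r (Ioo a c))
    (hne : ∀ x ∈ Ioo a c, u x * v x ≠ 0)
    (hint : IntegrableOn (fun t => u t * v t * r t) (Ioo a c))
    (hdom : ∀ t x, a < t → t < x → x < c → |u t * v x - v t * u x| < |v t * u x|)
    (hφ0 : ∀ x, φ 0 x = u x)
    (hφ : ∀ n, ∀ x ∈ Ioo a c,
      φ (n + 1) x = ∫ t in Ioo a x, (u t * v x - v t * u x) * φ n t * r t) :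
    ∀ n, ∀ x ∈ Ioo a c,
      |φ n x| ≤ (∫ t in Ioo a x, |u t * v t * r t|) ^ n * |u x| := by
  intro n
  induction n with
  | zero => intro x hx; simp [hφ0]
  | succ n ih =>
    intro x hx
    obtain ⟨hax, hxc⟩ := hx
    have hsub : Ioo a x ⊆ Ioo a c := Ioo_subset_Ioo le_rfl hxc.le
    have habs : IntegrableOn (fun t => |u t * v t * r t|) (Ioo a x) :=
      (hint.mono_set hsub).abs
    set ρ : ℝ → ℝ := fun y => ∫ t in Ioo a y, |u t * v t * r t| with hρdef
    have hρ0 : 0 ≤ ρ x := integral_nonneg fun t => abs_nonneg _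
    have hmono : ∀ t ∈ Ioo a x, ρ t ≤ ρ x := by
      intro t ht
      apply setIntegral_mono_set habs
      · filter_upwards with s using abs_nonneg _
      · exact HasSubset.Subset.eventuallyLE (Ioo_subset_Ioo le_rfl ht.2.le)
    rw [hφ n x ⟨hax, hxc⟩]
    have key : ‖∫ t in Ioo a x, (u t * v x - v t * u x) * φ n t * r t‖
        ≤ ∫ t in Ioo a x, (ρ x ^ n * |u x|) * |u t * v t * r t| := by
      apply norm_integral_le_of_norm_le (habs.const_mul _)
      rw [ae_restrict_iff' measurableSet_Ioo]
      filter_upwards with t ht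
      have htc : t ∈ Ioo a c := ⟨ht.1, ht.2.trans hxc⟩
      have h1 : |u t * v x - v t * u x| ≤ |v t * u x| :=
        (hdom t x ht.1 ht.2 hxc).le
      have h2 : |φ n t| ≤ ρ t ^ n * |u t| := ih t htc
      have h3 : ρ t ^ n ≤ ρ x ^ n :=
        pow_le_pow_left₀ (integral_nonneg fun s => abs_nonneg _) (hmono t ht) n
      have : ‖(u t * v x - v t * u x) * φ n t * r t‖
          = |u t * v x - v t * u x| * |φ n t| * |r t| := by
        simp [abs_mul]
      rw [this]
      calc |u t * v x - v t * u x| * |φ n t| * |r t|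
          ≤ |v t * u x| * (ρ t ^ n * |u t|) * |r t| := by
            apply mul_le_mul _ le_rfl (abs_nonneg _) _
            · exact mul_le_mul h1 h2 (abs_nonneg _) (abs_nonneg _)
            · positivity
        _ ≤ |v t * u x| * (ρ x ^ n * |u t|) * |r t| := by
            apply mul_le_mul _ le_rfl (abs_nonneg _) _
            · exact mul_le_mul_of_nonneg_left
                (mul_le_mul_of_nonneg_right h3 (abs_nonneg _)) (abs_nonneg _)
            · positivity
        _ = (ρ x ^ n * |u x|) * |u t * v t * r t| := by
            rw [abs_mul, abs_mul, abs_mul]; ring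
    calc |∫ t in Ioo a x, (u t * v x - v t * u x) * φ n t * r t| ≤ _ := key
      _ = (ρ x ^ n * |u x|) * ρ x := MeasureTheory.integral_const_mul _ _
      _ = ρ x ^ (n + 1) * |u x| := by ring
end

section
/- Let $\varphi_0, \theta_0, r$ be real-valued on $(a,b)$, let $f_1, f_2$ be nonoscillatory near $a$ (i.e., each has constant sign on some interval $(a, a+\varepsilon)$), and suppose $\theta_0(x)\varphi_0(t) - \varphi_0(x)\theta_0(t)$ has no sign change in $t \in (a,x)$ for $x$ near $a$, $r \geq 0$, and the integrals $F_j(x) = \int_a^x [\theta_0(x)\varphi_0(t) - \varphi_0(x)\theta_0(t)] f_j(t) r(t)\,dt$ converge for $j=1,2$. If $\lim_{x\to a^+} f_1(x)/f_2(x) = 0$, then $\lim_{x\to a^+} F_1(x)/F_2(x) = 0$. -/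
open MeasureTheory Filter Topology Set

lemma myhelper (s : Set ℝ) (hs : MeasurableSet s) (g1 g2 : ℝ → ℝ) (δ : ℝ)
    (h1 : IntegrableOn g1 s) (h2 : IntegrableOn g2 s)
    (hle : ∀ t ∈ s, |g1 t| ≤ δ * |g2 t|)
    (hsign : (∀ t ∈ s, 0 ≤ g2 t) ∨ (∀ t ∈ s, g2 t ≤ 0)) :
    |∫ t in s, g1 t| ≤ δ * |∫ t in s, g2 t| := by
  have step1 : |∫ t in s, g1 t| ≤ ∫ t in s, |g1 t| := by
    simpa using norm_integral_le_integral_norm (μ := volume.restrict s) g1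
  have step2 : (∫ t in s, |g1 t|) ≤ ∫ t in s, δ * |g2 t| :=
    setIntegral_mono_on h1.abs (h2.abs.const_mul δ) hs hle
  have key : (∫ t in s, |g2 t|) = |∫ t in s, g2 t| := by
    rcases hsign with h | h
    · rw [setIntegral_congr_fun hs (fun t ht => abs_of_nonneg (h t ht)),
        abs_of_nonneg (setIntegral_nonneg hs h)]
    · rw [setIntegral_congr_fun hs (fun t ht => abs_of_nonpos (h t ht)),
        abs_of_nonpos (setIntegral_nonpos hs h), integral_neg]
  calc |∫ t in s, g1 t| ≤ ∫ t in s, δ * |g2 t| := step1.trans step2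
    _ = δ * ∫ t in s, |g2 t| := MeasureTheory.integral_const_mul δ _
    _ = δ * |∫ t in s, g2 t| := by rw [key]

theorem stmt7 (a b : ℝ) (hab : a < b) (φ0 θ0 r f1 f2 : ℝ → ℝ)
    (hr : ∀ x ∈ Ioo a b, 0 ≤ r x)
    (hf1sign : ∃ ε > 0,
      (∀ x ∈ Ioo a (a + ε), 0 < f1 x) ∨ (∀ x ∈ Ioo a (a + ε), f1 x < 0))
    (hf2sign : ∃ ε > 0,
      (∀ x ∈ Ioo a (a + ε), 0 < f2 x) ∨ (∀ x ∈ Ioo a (a + ε), f2 x < 0))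
    (hker : ∃ ε > 0, ∀ x ∈ Ioo a (a + ε),
      (∀ t ∈ Ioo a x, 0 ≤ θ0 x * φ0 t - φ0 x * θ0 t) ∨
      (∀ t ∈ Ioo a x, θ0 x * φ0 t - φ0 x * θ0 t ≤ 0))
    (hint1 : ∀ x ∈ Ioo a b,
      IntegrableOn (fun t => (θ0 x * φ0 t - φ0 x * θ0 t) * f1 t * r t) (Ioo a x))
    (hint2 : ∀ x ∈ Ioo a b,
      IntegrableOn (fun t => (θ0 x * φ0 t - φ0 x * θ0 t) * f2 t * r t) (Ioo a x))
    (hlim : Tendsto (fun x => f1 x / f2 x) (𝓝[>] a) (𝓝 0)) :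
    Tendsto (fun x =>
        (∫ t in Ioo a x, (θ0 x * φ0 t - φ0 x * θ0 t) * f1 t * r t) /
        (∫ t in Ioo a x, (θ0 x * φ0 t - φ0 x * θ0 t) * f2 t * r t))
      (𝓝[>] a) (𝓝 0) := by
  obtain ⟨ε2, hε2, hf2s⟩ := hf2sign
  obtain ⟨ε3, hε3, hkers⟩ := hker
  rw [NormedAddCommGroup.tendsto_nhds_zero]
  intro ε hε
  have hev := NormedAddCommGroup.tendsto_nhds_zero.mp hlim (ε/2) (by positivity)
  obtain ⟨c, hc, hcsub⟩ := (nhdsGT_basis a).eventually_iff.mp hev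
  rw [(nhdsGT_basis a).eventually_iff]
  set d := min (min (a + ε2) (a + ε3)) (min c b) with hd
  refine ⟨d, ?_, ?_⟩
  · simp only [hd, lt_min_iff]
    exact ⟨⟨by linarith, by linarith⟩, hc, hab⟩
  intro x hx
  have hxb : x ∈ Ioo a b := ⟨hx.1, hx.2.trans_le ((min_le_right _ _).trans (min_le_right _ _))⟩
  have hx2 : x < a + ε2 := hx.2.trans_le ((min_le_left _ _).trans (min_le_left _ _))
  have hx3 : x ∈ Ioo a (a + ε3) :=
    ⟨hx.1, hx.2.trans_le ((min_le_left _ _).trans (min_le_right _ _))⟩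
  have hxc : x < c := hx.2.trans_le ((min_le_right _ _).trans (min_le_left _ _))
  -- facts for t in Ioo a x
  have hf2ne : ∀ t ∈ Ioo a x, f2 t ≠ 0 := by
    intro t ht
    have ht2 : t ∈ Ioo a (a + ε2) := ⟨ht.1, ht.2.trans hx2⟩
    rcases hf2s with h | h
    · exact ne_of_gt (h t ht2)
    · exact ne_of_lt (h t ht2)
  have hf1le : ∀ t ∈ Ioo a x, |f1 t| ≤ ε/2 * |f2 t| := by
    intro t ht
    have htc : t ∈ Ioo a c := ⟨ht.1, ht.2.trans hxc⟩
    have := hcsub htc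
    simp only [Real.norm_eq_abs, abs_div] at this
    have h2 : 0 < |f2 t| := abs_pos.mpr (hf2ne t ht)
    rw [div_lt_iff₀ h2] at this
    linarith
  set K : ℝ → ℝ := fun t => θ0 x * φ0 t - φ0 x * θ0 t with hK
  have hle : ∀ t ∈ Ioo a x, |K t * f1 t * r t| ≤ ε/2 * |K t * f2 t * r t| := by
    intro t ht
    rw [abs_mul, abs_mul, abs_mul, abs_mul]
    calc |K t| * |f1 t| * |r t| ≤ |K t| * (ε/2 * |f2 t|) * |r t| :=
          mul_le_mul_of_nonneg_right
            (mul_le_mul_of_nonneg_left (hf1le t ht) (abs_nonneg _)) (abs_nonneg _)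
      _ = ε/2 * (|K t| * |f2 t| * |r t|) := by ring
  have hsign : (∀ t ∈ Ioo a x, 0 ≤ K t * f2 t * r t) ∨
      (∀ t ∈ Ioo a x, K t * f2 t * r t ≤ 0) := by
    have hrpos : ∀ t ∈ Ioo a x, 0 ≤ r t := fun t ht =>
      hr t ⟨ht.1, ht.2.trans hxb.2⟩
    rcases hkers x hx3 with hk | hk <;> rcases hf2s with h2 | h2
    · exact Or.inl fun t ht => mul_nonneg (mul_nonneg (hk t ht)
        (le_of_lt (h2 t ⟨ht.1, ht.2.trans hx2⟩))) (hrpos t ht)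
    · exact Or.inr fun t ht => mul_nonpos_of_nonpos_of_nonneg
        (mul_nonpos_of_nonneg_of_nonpos (hk t ht) (le_of_lt (h2 t ⟨ht.1, ht.2.trans hx2⟩)))
        (hrpos t ht)
    · exact Or.inr fun t ht => mul_nonpos_of_nonpos_of_nonneg
        (mul_nonpos_of_nonpos_of_nonneg (hk t ht) (le_of_lt (h2 t ⟨ht.1, ht.2.trans hx2⟩)))
        (hrpos t ht)
    · refine Or.inl fun t ht => mul_nonneg ?_ (hrpos t ht)
      have hk' : K t ≤ 0 := hk t ht
      have h2' : f2 t < 0 := h2 t ⟨ht.1, ht.2.trans hx2⟩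
      nlinarith
  have key := myhelper (Ioo a x) measurableSet_Ioo _ _ (ε/2)
    (hint1 x hxb) (hint2 x hxb) hle hsign
  set F1 := ∫ t in Ioo a x, K t * f1 t * r t
  set F2 := ∫ t in Ioo a x, K t * f2 t * r t
  show ‖F1 / F2‖ < ε
  rw [Real.norm_eq_abs, abs_div]
  rcases eq_or_ne F2 0 with h0 | h0
  · rw [h0, abs_zero, div_zero]
    exact hε
  · have h2 : 0 < |F2| := abs_pos.mpr h0
    rw [div_lt_iff₀ h2]
    calc |F1| ≤ ε/2 * |F2| := key
      _ < ε * |F2| := by nlinarith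
end
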